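/- arXiv:2511.21259 — 2 statements merged into one kernel-verified Lean document; each statement's English description precedes it below -/
import Mathlib

section
/- The binary operation ⋄ on F₃, defined by f ⋄ g = φ_{l(f)}(g) · f, where l(f) is the central leaf address of f, makes F₃ into a monoid with identity element the identity homeomorphism. -/
open Set
open scoped Classical

noncomputable section

/-- An address: a finite word in the alphabet `{0,1,2}`. -/
abbrev Address : Type := List (Fin 3)

/-- Left endpoint of the triadic interval `I_α`. -/
def addrLeft : Address → ℝ
  | [] => 0
  | i :: α => ((i : ℕ) : ℝ) / 3 + addrLeft α / 3

/-- Length of the triadic interval `I_α`. -/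
def addrLen (α : Address) : ℝ := (1 / 3 : ℝ) ^ α.length

/-- The triadic subinterval `I_α ⊆ [0,1]` determined by the address `α`. -/
def Iaddr (α : Address) : Set ℝ := Set.Icc (addrLeft α) (addrLeft α + addrLen α)

/-- The linear orientation-preserving isomorphism `ψ_α : I_α → [0,1]`. -/
def psi (α : Address) (t : ℝ) : ℝ := (t - addrLeft α) / addrLen α

/-- The inverse `ψ_α⁻¹ : [0,1] → I_α`. -/
def psiInv (α : Address) (t : ℝ) : ℝ := addrLeft α + addrLen α * t

/-- `φ_α(f)` acts as `ψ_α⁻¹ ∘ f ∘ ψ_α` on `I_α` and as the identity elsewhere. -/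
def phi (α : Address) (f : ℝ → ℝ) : ℝ → ℝ :=
  fun t => if t ∈ Iaddr α then psiInv α (f (psi α t)) else t

/-- A triadic rational. -/
def IsTriadic (q : ℝ) : Prop := ∃ a : ℤ, ∃ n : ℕ, q = (a : ℝ) / 3 ^ n

/-- Membership in the Brown–Thompson group `F₃`, realized as piecewise-linear
homeomorphisms of `[0,1]` (extended by the identity to all of `ℝ`) with breakpoints
at triadic rationals and slopes powers of `3`. The group product is `f·g = g ∘ f`. -/
def IsF3 (f : ℝ → ℝ) : Prop :=
  (∀ t, t ∉ Set.Icc (0 : ℝ) 1 → f t = t) ∧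
  Set.BijOn f (Set.Icc 0 1) (Set.Icc 0 1) ∧
  StrictMonoOn f (Set.Icc 0 1) ∧
  ∃ breaks : Finset ℝ, (∀ b ∈ breaks, IsTriadic b) ∧
    ∀ x ∈ Set.Icc (0 : ℝ) 1, x ∉ breaks →
      ∃ (k : ℤ) (c : ℝ), IsTriadic c ∧
        ∀ᶠ y in nhdsWithin x (Set.Icc 0 1), f y = (3 : ℝ) ^ k * y + c

/-- `f` maps `I_α` linearly (preserving orientation, with triadic affine data)
onto the triadic interval `I_β`. -/
def IsTriadicLinearOn (f : ℝ → ℝ) (α β : Address) : Prop :=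
  ∀ t ∈ Iaddr α, f t = psiInv β (psi α t)

/-- The depth of the maximal all-`i` leaf of the reduced domain tree of `f`:
the least `n` such that `f` maps `I_{iⁿ}` linearly onto a triadic interval. -/
def leafExp (i : Fin 3) (f : ℝ → ℝ) : ℕ :=
  sInf {n : ℕ | ∃ β : Address, IsTriadicLinearOn f (List.replicate n i) β}

/-- The address `l(f) = 1ⁿ` of the central leaf of `f` (the leaf of the reduced
domain tree whose interval contains `1/2`). -/
def centralLeaf (f : ℝ → ℝ) : Address := List.replicate (leafExp 1 f) 1

/-- The central monoid operation `f ⋄ g = φ_{l(f)}(g) · f` (recall `a·b = b ∘ a`). -/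
def diam (f g : ℝ → ℝ) : ℝ → ℝ := fun t => f (phi (centralLeaf f) g t)

/-!
Since `φ_α(g)` is the conjugate of `g` by the affine chart `ψ_α`, the group `F₃` is closed
under `φ_α`, and `φ_α(g ∘ k) = φ_α(g) ∘ φ_α(k)`, `φ_α ∘ φ_β = φ_{αβ}`. Associativity
therefore reduces to `l(f ⋄ g) = l(f) l(g)`. The map `f ⋄ g` is linear on `I_{l(f) l(g)}`:
there `φ_{l(f)}(g)` acts linearly into `I_{l(f)}`, where `f` is linear. Conversely, if
`f ⋄ g` is linear on `I_{1ⁿ}`, then peeling `f` off shows that `g` is linear on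
`I_{1^{n - |l(f)|}}`, because an affine map onto a triadic interval contained in `I_δ` has an
address extending `δ`; the degenerate case `l(g) = []` means `g = id`. The central leaf
exists because `1/2` is not triadic, hence is never a breakpoint.
-/

open Filter Topology Function

section Address

lemma addrLen_pos (α : Address) : 0 < addrLen α := by
  unfold addrLen; positivity

lemma addrLen_cons (i : Fin 3) (α : Address) : addrLen (i :: α) = addrLen α / 3 := by
  simp only [addrLen, List.length_cons, pow_succ]; ring

lemma addrLeft_nonneg (α : Address) : 0 ≤ addrLeft α := by
  induction α with
  | nil => exact le_rfl
  | cons i α ih => rw [addrLeft]; positivity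

lemma addrLeft_add_addrLen_le_one (α : Address) : addrLeft α + addrLen α ≤ 1 := by
  induction α with
  | nil => simp [addrLeft, addrLen]
  | cons i α ih =>
    have hi : ((i : ℕ) : ℝ) ≤ 2 := by exact_mod_cast Nat.le_of_lt_succ i.is_lt
    rw [addrLeft, addrLen_cons]
    linarith

lemma Iaddr_subset_Icc (α : Address) : Iaddr α ⊆ Icc 0 1 := fun _ ht =>
  ⟨(addrLeft_nonneg α).trans ht.1, ht.2.trans (addrLeft_add_addrLen_le_one α)⟩

lemma Iaddr_nil : Iaddr [] = Icc 0 1 := by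
  simp [Iaddr, addrLeft, addrLen]

lemma psi_nil (t : ℝ) : psi [] t = t := by
  simp [psi, addrLeft, addrLen]

lemma psiInv_nil (t : ℝ) : psiInv [] t = t := by
  simp [psiInv, addrLeft, addrLen]

lemma psi_psiInv (α : Address) (t : ℝ) : psi α (psiInv α t) = t := by
  unfold psi psiInv; field_simp [(addrLen_pos α).ne']; ring

lemma psiInv_psi (α : Address) (t : ℝ) : psiInv α (psi α t) = t := by
  unfold psi psiInv; field_simp [(addrLen_pos α).ne']; ring

lemma psi_strictMono (α : Address) : StrictMono (psi α) := fun _ _ h =>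
  div_lt_div_of_pos_right (by linarith) (addrLen_pos α)

lemma psiInv_strictMono (α : Address) : StrictMono (psiInv α) := fun _ _ h => by
  unfold psiInv; nlinarith [addrLen_pos α]

lemma psi_surjective (α : Address) : Surjective (psi α) := fun t =>
  ⟨psiInv α t, psi_psiInv α t⟩

lemma psiInv_surjective (α : Address) : Surjective (psiInv α) := fun t =>
  ⟨psi α t, psiInv_psi α t⟩

lemma mem_Iaddr_iff {α : Address} {t : ℝ} : t ∈ Iaddr α ↔ psi α t ∈ Icc 0 1 := by
  have hℓ := addrLen_pos α
  rw [Iaddr, psi, mem_Icc, mem_Icc, le_div_iff₀ hℓ, div_le_iff₀ hℓ]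
  constructor <;> rintro ⟨h₁, h₂⟩ <;> constructor <;> linarith

lemma psi_mem_Icc {α : Address} {t : ℝ} (h : t ∈ Iaddr α) : psi α t ∈ Icc 0 1 :=
  mem_Iaddr_iff.mp h

lemma psiInv_mem_Iaddr {α : Address} {t : ℝ} (h : t ∈ Icc 0 1) : psiInv α t ∈ Iaddr α := by
  rwa [mem_Iaddr_iff, psi_psiInv]

lemma addrLeft_append (α β : Address) :
    addrLeft (α ++ β) = addrLeft α + addrLen α * addrLeft β := by
  induction α with
  | nil => simp [addrLeft, addrLen]
  | cons i α ih => rw [List.cons_append, addrLeft, addrLeft, ih, addrLen_cons]; ring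

lemma addrLen_append (α β : Address) : addrLen (α ++ β) = addrLen α * addrLen β := by
  rw [addrLen, addrLen, addrLen, List.length_append, pow_add]

lemma psiInv_psiInv (α β : Address) (t : ℝ) :
    psiInv α (psiInv β t) = psiInv (α ++ β) t := by
  unfold psiInv; rw [addrLeft_append, addrLen_append]; ring

lemma psi_psi (α β : Address) (t : ℝ) : psi β (psi α t) = psi (α ++ β) t := by
  unfold psi
  rw [addrLeft_append, addrLen_append]
  field_simp [(addrLen_pos α).ne', (addrLen_pos β).ne']
  ring

lemma psi_psiInv_append (α β : Address) (t : ℝ) :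
    psi α (psiInv (α ++ β) t) = psiInv β t := by
  rw [← psiInv_psiInv, psi_psiInv]

lemma psi_append_psiInv (α β : Address) (t : ℝ) :
    psi (α ++ β) (psiInv α t) = psi β t := by
  rw [← psi_psi, psi_psiInv]

lemma mem_Iaddr_append {α β : Address} {t : ℝ} :
    t ∈ Iaddr (α ++ β) ↔ psi α t ∈ Iaddr β := by
  rw [mem_Iaddr_iff, mem_Iaddr_iff, psi_psi]

lemma Iaddr_append_subset (α β : Address) : Iaddr (α ++ β) ⊆ Iaddr α := fun t ht => by
  rw [mem_Iaddr_iff]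
  exact Iaddr_subset_Icc β (mem_Iaddr_append.mp ht)

end Address

lemma prefix_of_Iaddr_subset {α β : Address} (h : Iaddr β ⊆ Iaddr α) : α <+: β := by
  induction α generalizing β with
  | nil => exact List.nil_prefix
  | cons i α ih =>
    have hα := addrLeft_add_addrLen_le_one α
    have hα₀ := addrLeft_nonneg α
    cases β with
    | nil =>
      rw [Iaddr_nil] at h
      have h₀ := (h ⟨le_rfl, zero_le_one⟩).1
      have h₁ := (h ⟨zero_le_one, le_rfl⟩).2
      simp only [addrLeft, addrLen_cons] at h₀ h₁
      have : (0 : ℝ) ≤ (i : ℕ) := Nat.cast_nonneg _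
      linarith [addrLen_pos α]
    | cons j β =>
      have hβ := addrLeft_add_addrLen_le_one β
      have hβ₀ := addrLeft_nonneg β
      have hℓ := addrLen_pos β
      have hl := h ⟨le_rfl, by linarith [addrLen_pos (j :: β)]⟩
      have hr := h ⟨by linarith [addrLen_pos (j :: β)], le_rfl⟩
      simp only [Iaddr, mem_Icc, addrLeft, addrLen_cons] at hl hr
      -- `I_{j :: β}` has positive length and lies in both `I_[i]` and `I_[j]`.
      have hij : i = j := by
        have h₁ : ((i : ℕ) : ℝ) < (j : ℕ) + 1 := by linarith
        have h₂ : ((j : ℕ) : ℝ) < (i : ℕ) + 1 := by linarith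
        norm_cast at h₁ h₂
        omega
      subst hij
      refine List.cons_prefix_cons.mpr ⟨rfl, ih fun u hu => ?_⟩
      have hu' : psiInv [i] u ∈ Iaddr ([i] ++ β) := by
        rwa [mem_Iaddr_append, psi_psiInv]
      have := mem_Iaddr_append.mp (show psiInv [i] u ∈ Iaddr ([i] ++ α) from h hu')
      rwa [psi_psiInv] at this

section Triadic

lemma isTriadic_zero : IsTriadic 0 := ⟨0, 0, by simp⟩

lemma isTriadic_one : IsTriadic 1 := ⟨1, 0, by simp⟩

lemma isTriadic_zpow (k : ℤ) : IsTriadic ((3 : ℝ) ^ k) := by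
  obtain ⟨n, rfl | rfl⟩ := Int.eq_nat_or_neg k
  · exact ⟨3 ^ n, 0, by simp⟩
  · exact ⟨1, n, by simp⟩

lemma IsTriadic.add {p q : ℝ} (hp : IsTriadic p) (hq : IsTriadic q) : IsTriadic (p + q) := by
  obtain ⟨a, n, rfl⟩ := hp
  obtain ⟨b, m, rfl⟩ := hq
  exact ⟨a * 3 ^ m + b * 3 ^ n, n + m, by push_cast; rw [pow_add]; field_simp⟩

lemma IsTriadic.mul {p q : ℝ} (hp : IsTriadic p) (hq : IsTriadic q) : IsTriadic (p * q) := by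
  obtain ⟨a, n, rfl⟩ := hp
  obtain ⟨b, m, rfl⟩ := hq
  exact ⟨a * b, n + m, by push_cast; rw [pow_add, div_mul_div_comm]⟩

lemma IsTriadic.neg {p : ℝ} (hp : IsTriadic p) : IsTriadic (-p) := by
  obtain ⟨a, n, rfl⟩ := hp
  exact ⟨-a, n, by push_cast; ring⟩

lemma addrLeft_eq_int_div (α : Address) : ∃ a : ℤ, addrLeft α = a / 3 ^ α.length := by
  induction α with
  | nil => exact ⟨0, by simp [addrLeft]⟩
  | cons i α ih =>
    obtain ⟨a, ha⟩ := ih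
    refine ⟨(i : ℕ) * 3 ^ α.length + a, ?_⟩
    rw [addrLeft, ha, List.length_cons, pow_succ]
    push_cast
    field_simp

lemma isTriadic_addrLeft (α : Address) : IsTriadic (addrLeft α) :=
  let ⟨a, ha⟩ := addrLeft_eq_int_div α
  ⟨a, α.length, ha⟩

lemma not_isTriadic_half : ¬ IsTriadic (1 / 2) := by
  rintro ⟨a, n, ha⟩
  have h : (2 * a : ℤ) = 3 ^ n := by
    rw [eq_div_iff (by positivity)] at ha
    exact_mod_cast (by linarith : (2 * a : ℝ) = 3 ^ n)
  have : Odd ((3 : ℤ) ^ n) := Odd.pow ⟨1, rfl⟩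
  rw [← h] at this
  exact Int.not_even_iff_odd.mpr this (even_two_mul a)

lemma exists_addrLeft_eq (m a : ℕ) (ha : a < 3 ^ m) :
    ∃ β : Address, β.length = m ∧ addrLeft β = a / 3 ^ m := by
  induction m generalizing a with
  | zero => exact ⟨[], rfl, by simp_all [addrLeft]⟩
  | succ m ih =>
    have hq : a / 3 ^ m < 3 := Nat.div_lt_of_lt_mul (by rwa [pow_succ', mul_comm] at ha)
    obtain ⟨β, hlen, hβ⟩ := ih (a % 3 ^ m) (Nat.mod_lt _ (by positivity))
    refine ⟨⟨a / 3 ^ m, hq⟩ :: β, by simp [hlen], ?_⟩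
    have hdiv : (a : ℝ) = 3 ^ m * (a / 3 ^ m : ℕ) + (a % 3 ^ m : ℕ) := by
      exact_mod_cast (Nat.div_add_mod a (3 ^ m)).symm
    rw [addrLeft, hβ, hdiv, pow_succ]
    field_simp

lemma exists_addrLeft_eq_of_le {m : ℕ} {a : ℤ} (h₀ : 0 ≤ (a : ℝ) / 3 ^ m)
    (h₁ : (a : ℝ) / 3 ^ m + (1 / 3) ^ m ≤ 1) :
    ∃ β : Address, addrLen β = (1 / 3) ^ m ∧ addrLeft β = a / 3 ^ m := by
  have h3 : (0 : ℝ) < 3 ^ m := by positivity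
  rw [le_div_iff₀ h3, zero_mul] at h₀
  rw [div_pow, one_pow, ← add_div, div_le_one h3] at h₁
  lift a to ℕ using by exact_mod_cast h₀
  rw [Int.cast_natCast] at h₁ ⊢
  have ha : a < 3 ^ m := by exact_mod_cast (by linarith : (a : ℝ) < 3 ^ m)
  obtain ⟨β, hlen, hleft⟩ := exists_addrLeft_eq m a ha
  exact ⟨β, by rw [addrLen, hlen], hleft⟩

end Triadic

section TriadicBreaks

def IsTriadicAffineAt (f : ℝ → ℝ) (x : ℝ) : Prop :=
  ∃ (k : ℤ) (c : ℝ), IsTriadic c ∧ ∀ᶠ y in 𝓝 x, f y = 3 ^ k * y + c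

/-- Unlike in `IsF3`, affineness is asked on neighbourhoods in `ℝ`, so that the notion is stable
under composition with maps that do not preserve `[0,1]`, such as `ψ_α`. -/
def HasTriadicBreaks (f : ℝ → ℝ) : Prop :=
  ∃ breaks : Finset ℝ, (∀ b ∈ breaks, IsTriadic b) ∧
    ∀ x ∉ breaks, IsTriadicAffineAt f x

lemma IsTriadicAffineAt.continuousAt {f : ℝ → ℝ} {x : ℝ} (hf : IsTriadicAffineAt f x) :
    ContinuousAt f x := by
  obtain ⟨k, c, -, hf⟩ := hf
  exact (continuousAt_congr hf).mpr (by fun_prop)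

lemma IsTriadicAffineAt.comp {f h : ℝ → ℝ} {x : ℝ} (hf : IsTriadicAffineAt f (h x))
    (hh : IsTriadicAffineAt h x) : IsTriadicAffineAt (fun y => f (h y)) x := by
  have hcont := hh.continuousAt
  obtain ⟨k₁, c₁, hc₁, hh⟩ := hh
  obtain ⟨k₂, c₂, hc₂, hf⟩ := hf
  refine ⟨k₂ + k₁, 3 ^ k₂ * c₁ + c₂, ((isTriadic_zpow k₂).mul hc₁).add hc₂, ?_⟩
  filter_upwards [hh, hcont.eventually hf] with y hy₁ hy₂
  rw [hy₂, hy₁, zpow_add₀ three_ne_zero]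
  ring

lemma IsTriadicAffineAt.isTriadic {h : ℝ → ℝ} {x : ℝ} (hh : IsTriadicAffineAt h x)
    (hx : IsTriadic (h x)) : IsTriadic x := by
  obtain ⟨k, c, hc, hh⟩ := hh
  have hx' : x = 3 ^ (-k) * (h x + -c) := by
    rw [hh.self_of_nhds, zpow_neg, add_neg_cancel_right, inv_mul_cancel_left₀ (by positivity)]
  rw [hx']
  exact (isTriadic_zpow _).mul (hx.add hc.neg)

lemma hasTriadicBreaks_of_forall_eq {f : ℝ → ℝ} {k : ℤ} {c : ℝ} (hc : IsTriadic c)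
    (hf : ∀ y, f y = 3 ^ k * y + c) : HasTriadicBreaks f :=
  ⟨∅, by simp, fun _ _ => ⟨k, c, hc, .of_forall hf⟩⟩

lemma HasTriadicBreaks.comp {f h : ℝ → ℝ} (hf : HasTriadicBreaks f) (hh : HasTriadicBreaks h)
    (hinj : Injective h) : HasTriadicBreaks (fun y => f (h y)) := by
  obtain ⟨Bf, hBf, hf⟩ := hf
  obtain ⟨Bh, hBh, hh⟩ := hh
  refine ⟨Bh ∪ Bf.preimage h hinj.injOn, fun b hb => ?_, fun x hx => ?_⟩
  · rw [Finset.mem_union, Finset.mem_preimage] at hb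
    by_cases hbh : b ∈ Bh
    · exact hBh b hbh
    · exact (hh b hbh).isTriadic (hBf _ (hb.resolve_left hbh))
  · rw [Finset.mem_union, Finset.mem_preimage, not_or] at hx
    exact (hf _ hx.2).comp (hh x hx.1)

lemma hasTriadicBreaks_psi (α : Address) : HasTriadicBreaks (psi α) := by
  refine hasTriadicBreaks_of_forall_eq (k := α.length)
    (c := -(3 ^ (α.length : ℤ) * addrLeft α))
    ((isTriadic_zpow _).mul (isTriadic_addrLeft α)).neg fun y => ?_
  rw [psi, addrLen, zpow_natCast, div_pow, one_pow]
  field_simp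
  ring

lemma hasTriadicBreaks_psiInv (α : Address) : HasTriadicBreaks (psiInv α) := by
  refine hasTriadicBreaks_of_forall_eq (k := -α.length) (c := addrLeft α)
    (isTriadic_addrLeft α) fun y => ?_
  rw [psiInv, addrLen, zpow_neg, zpow_natCast, div_pow, one_pow, one_div]
  ring

end TriadicBreaks

section F3

lemma IsF3.mapsTo {f : ℝ → ℝ} (hf : IsF3 f) : MapsTo f (Icc 0 1) (Icc 0 1) :=
  hf.2.1.mapsTo

lemma IsF3.strictMono {f : ℝ → ℝ} (hf : IsF3 f) : StrictMono f := by
  intro s t hst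
  have hout : ∀ x ∉ Icc (0 : ℝ) 1, f x = x ∧ (x < 0 ∨ 1 < x) := fun x hx =>
    ⟨hf.1 x hx, by simpa only [mem_Icc, not_and_or, not_le] using hx⟩
  by_cases hs : s ∈ Icc (0 : ℝ) 1 <;> by_cases ht : t ∈ Icc (0 : ℝ) 1
  · exact hf.2.2.1 hs ht hst
  · have := (hf.mapsTo hs).2
    obtain ⟨hft, ht | ht⟩ := hout t ht <;> linarith [hs.1]
  · have := (hf.mapsTo ht).1
    obtain ⟨hfs, hs | hs⟩ := hout s hs <;> linarith [ht.2]
  · rw [(hout s hs).1, (hout t ht).1]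
    exact hst

lemma IsF3.surjective {f : ℝ → ℝ} (hf : IsF3 f) : Surjective f := fun y => by
  by_cases hy : y ∈ Icc (0 : ℝ) 1
  · obtain ⟨x, -, hx⟩ := hf.2.1.surjOn hy
    exact ⟨x, hx⟩
  · exact ⟨y, hf.1 y hy⟩

lemma IsF3.hasTriadicBreaks {f : ℝ → ℝ} (hf : IsF3 f) : HasTriadicBreaks f := by
  obtain ⟨hout, -, -, B, hB, hloc⟩ := hf
  refine ⟨insert 0 (insert 1 B), fun b hb => ?_, fun x hx => ?_⟩
  · rcases Finset.mem_insert.mp hb with rfl | hb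
    · exact isTriadic_zero
    rcases Finset.mem_insert.mp hb with rfl | hb
    · exact isTriadic_one
    · exact hB b hb
  · simp only [Finset.mem_insert, not_or] at hx
    obtain ⟨hx₀, hx₁, hxB⟩ := hx
    by_cases hxI : x ∈ Icc (0 : ℝ) 1
    · obtain ⟨k, c, hc, hloc⟩ := hloc x hxI hxB
      have hI : Icc (0 : ℝ) 1 ∈ 𝓝 x :=
        Icc_mem_nhds (hxI.1.lt_of_ne (Ne.symm hx₀)) (hxI.2.lt_of_ne hx₁)
      exact ⟨k, c, hc, by rwa [nhdsWithin_eq_nhds.mpr hI] at hloc⟩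
    · refine ⟨0, 0, isTriadic_zero, ?_⟩
      filter_upwards [isClosed_Icc.isOpen_compl.mem_nhds hxI] with y hy
      simp [hout y hy]

lemma isF3_of_strictMono {f : ℝ → ℝ} (hout : ∀ t ∉ Icc (0 : ℝ) 1, f t = t)
    (hmono : StrictMono f) (hsurj : Surjective f) (hbreaks : HasTriadicBreaks f) : IsF3 f := by
  have hmaps : MapsTo f (Icc 0 1) (Icc 0 1) := fun t ht => by
    by_contra hft
    rw [hmono.injective (hout _ hft)] at hft
    exact hft ht
  refine ⟨hout, ⟨hmaps, hmono.injective.injOn, fun y hy => ?_⟩, hmono.strictMonoOn _, ?_⟩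
  · obtain ⟨x, rfl⟩ := hsurj y
    refine ⟨x, by_contra fun hx => hx ?_, rfl⟩
    rwa [hout x hx] at hy
  · obtain ⟨B, hB, hloc⟩ := hbreaks
    refine ⟨B, hB, fun x _ hx => ?_⟩
    obtain ⟨k, c, hc, h⟩ := hloc x hx
    exact ⟨k, c, hc, h.filter_mono nhdsWithin_le_nhds⟩

lemma IsF3.comp {f h : ℝ → ℝ} (hf : IsF3 f) (hh : IsF3 h) : IsF3 (fun t => f (h t)) :=
  isF3_of_strictMono (fun t ht => by rw [hh.1 t ht, hf.1 t ht])
    (hf.strictMono.comp hh.strictMono) (hf.surjective.comp hh.surjective)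
    (hf.hasTriadicBreaks.comp hh.hasTriadicBreaks hh.strictMono.injective)

end F3

section Phi

variable {α β : Address} {g k : ℝ → ℝ}

lemma phi_of_mem {t : ℝ} (ht : t ∈ Iaddr α) : phi α g t = psiInv α (g (psi α t)) :=
  if_pos ht

lemma phi_of_not_mem {t : ℝ} (ht : t ∉ Iaddr α) : phi α g t = t :=
  if_neg ht

lemma phi_of_not_mem_Icc {t : ℝ} (ht : t ∉ Icc (0 : ℝ) 1) : phi α g t = t :=
  phi_of_not_mem fun h => ht (Iaddr_subset_Icc α h)

lemma phi_eq_psiInv_comp (hg : ∀ t ∉ Icc (0 : ℝ) 1, g t = t) :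
    phi α g = fun t => psiInv α (g (psi α t)) := by
  funext t
  by_cases ht : t ∈ Iaddr α
  · exact phi_of_mem ht
  · rw [phi_of_not_mem ht, hg _ (mt mem_Iaddr_iff.mpr ht), psiInv_psi]

lemma phi_id : phi α (fun t => t) = fun t => t := by
  rw [phi_eq_psiInv_comp fun _ _ => rfl]
  simp only [psiInv_psi]

lemma phi_nil (hg : ∀ t ∉ Icc (0 : ℝ) 1, g t = t) : phi [] g = g := by
  rw [phi_eq_psiInv_comp hg]
  simp only [psi_nil, psiInv_nil]

lemma phi_comp (hg : ∀ t ∉ Icc (0 : ℝ) 1, g t = t) (hk : ∀ t ∉ Icc (0 : ℝ) 1, k t = t) :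
    phi α (fun t => g (k t)) = fun t => phi α g (phi α k t) := by
  rw [phi_eq_psiInv_comp hg, phi_eq_psiInv_comp hk,
    phi_eq_psiInv_comp fun t ht => by rw [hk t ht, hg t ht]]
  simp only [psi_psiInv]

lemma phi_phi (hk : ∀ t ∉ Icc (0 : ℝ) 1, k t = t) : phi α (phi β k) = phi (α ++ β) k := by
  rw [phi_eq_psiInv_comp fun t ht => phi_of_not_mem_Icc ht, phi_eq_psiInv_comp hk,
    phi_eq_psiInv_comp hk]
  simp only [psiInv_psiInv, psi_psi]

lemma IsF3.phi (α : Address) (hg : IsF3 g) : IsF3 (phi α g) := by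
  have hmono : StrictMono fun t => g (psi α t) := hg.strictMono.comp (psi_strictMono α)
  refine isF3_of_strictMono (fun t ht => phi_of_not_mem_Icc ht) ?_ ?_ ?_ <;>
    rw [phi_eq_psiInv_comp hg.1]
  · exact (psiInv_strictMono α).comp hmono
  · exact (psiInv_surjective α).comp (hg.surjective.comp (psi_surjective α))
  · exact (hasTriadicBreaks_psiInv α).comp
      (hg.hasTriadicBreaks.comp (hasTriadicBreaks_psi α) (psi_strictMono α).injective)
      hmono.injective

end Phi

section TriadicLinear

variable {f g : ℝ → ℝ}

lemma IsTriadicLinearOn.append {α β : Address} (h : IsTriadicLinearOn f α β) (γ : Address) :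
    IsTriadicLinearOn f (α ++ γ) (β ++ γ) := fun t ht => by
  rw [h t (Iaddr_append_subset α γ ht), ← psiInv_psiInv, ← psi_psi, psiInv_psi]

/-- The target interval `I_β` lies in `I_δ`, so `β` extends `δ`. -/
lemma IsTriadicLinearOn.of_psiInv_comp {γ δ β : Address} (hg : MapsTo g (Iaddr γ) (Icc 0 1))
    (h : IsTriadicLinearOn (fun s => psiInv δ (g s)) γ β) :
    ∃ β', IsTriadicLinearOn g γ β' := by
  have hsub : Iaddr β ⊆ Iaddr δ := fun u hu => by
    have hs : psiInv γ (psi β u) ∈ Iaddr γ := psiInv_mem_Iaddr (psi_mem_Icc hu)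
    have hu' : psiInv δ (g _) = u := (h _ hs).trans (by rw [psi_psiInv, psiInv_psi])
    exact hu' ▸ psiInv_mem_Iaddr (hg hs)
  obtain ⟨β', rfl⟩ := prefix_of_Iaddr_subset hsub
  refine ⟨β', fun s hs => ?_⟩
  rw [← psi_psiInv δ (g s), show psiInv δ (g s) = _ from h s hs, psi_psiInv_append]

lemma isTriadicLinearOn_of_affine {α β : Address} {k : ℤ} {c : ℝ}
    (hf : ∀ t ∈ Iaddr α, f t = 3 ^ k * t + c) (hleft : addrLeft β = f (addrLeft α))
    (hlen : addrLen β = 3 ^ k * addrLen α) : IsTriadicLinearOn f α β := fun t ht => by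
  rw [psiInv, psi, hleft, hlen, hf t ht, hf _ ⟨le_rfl, by linarith [addrLen_pos α]⟩]
  field_simp [(addrLen_pos α).ne']
  ring

lemma exists_isTriadicLinearOn_of_affine {α : Address} {k c : ℤ} {p : ℕ}
    (hkp : k + p ≤ α.length) (hf : ∀ t ∈ Iaddr α, f t = 3 ^ k * t + c / 3 ^ p)
    (hmaps : MapsTo f (Iaddr α) (Icc 0 1)) : ∃ β, IsTriadicLinearOn f α β := by
  obtain ⟨m, hm⟩ : ∃ m : ℕ, (m : ℤ) = α.length - k :=
    ⟨_, Int.toNat_of_nonneg (by omega)⟩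
  have h3 : (3 : ℝ) ^ k * 3 ^ m = 3 ^ α.length := by
    rw [← zpow_natCast, ← zpow_natCast, ← zpow_add₀ three_ne_zero]
    congr 1
    omega
  have hslope : 3 ^ k * addrLen α = (1 / 3) ^ m := by
    rw [addrLen, one_div, inv_pow, inv_pow, ← h3]
    field_simp
  obtain ⟨A, hA⟩ := addrLeft_eq_int_div α
  have hL : addrLeft α ∈ Iaddr α := ⟨le_rfl, by linarith [addrLen_pos α]⟩
  have hR : addrLeft α + addrLen α ∈ Iaddr α := ⟨by linarith [addrLen_pos α], le_rfl⟩
  have hfR : f (addrLeft α + addrLen α) = f (addrLeft α) + (1 / 3) ^ m := by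
    rw [hf _ hR, hf _ hL, ← hslope]
    ring
  have hfL : f (addrLeft α) = (A + c * 3 ^ (m - p) : ℤ) / 3 ^ m := by
    have h3p : (3 : ℝ) ^ m = 3 ^ (m - p) * 3 ^ p := by
      rw [← pow_add, Nat.sub_add_cancel (by omega)]
    rw [hf _ hL, hA, eq_div_iff (by positivity), ← h3, h3p]
    push_cast
    field_simp
  have h₁ := (hmaps hR).2
  rw [hfR, hfL] at h₁
  have h₀ := (hmaps hL).1
  rw [hfL] at h₀
  obtain ⟨β, hlen, hleft⟩ := exists_addrLeft_eq_of_le h₀ h₁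
  exact ⟨β, isTriadicLinearOn_of_affine hf (hleft.trans hfL.symm) (hlen.trans hslope.symm)⟩

lemma addrLeft_replicate_one (n : ℕ) :
    addrLeft (List.replicate n 1) = 1 / 2 - (1 / 3) ^ n / 2 := by
  induction n with
  | zero => simp [addrLeft]
  | succ n ih =>
    rw [List.replicate_succ, addrLeft, ih, pow_succ]
    norm_num
    ring

lemma IsF3.exists_isTriadicLinearOn_replicate (hf : IsF3 f) :
    ∃ n β, IsTriadicLinearOn f (List.replicate n 1) β := by
  obtain ⟨B, hB, hloc⟩ := hf.hasTriadicBreaks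
  obtain ⟨k, _, ⟨c, p, rfl⟩, hk⟩ := hloc (1 / 2) fun h => not_isTriadic_half (hB _ h)
  obtain ⟨ε, hε, hball⟩ := Metric.eventually_nhds_iff.mp hk
  obtain ⟨n₀, hn₀⟩ := exists_pow_lt_of_lt_one hε (by norm_num : (1 / 3 : ℝ) < 1)
  refine ⟨max n₀ (k + p).toNat, exists_isTriadicLinearOn_of_affine (by simp)
    (fun t ht => hball ?_) fun t ht => hf.mapsTo (Iaddr_subset_Icc _ ht)⟩
  have hsmall : ((1 : ℝ) / 3) ^ max n₀ (k + p).toNat ≤ (1 / 3) ^ n₀ :=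
    pow_le_pow_of_le_one (by norm_num) (by norm_num) (le_max_left _ _)
  obtain ⟨h₁, h₂⟩ := ht
  simp only [addrLeft_replicate_one, addrLen, List.length_replicate] at h₁ h₂
  rw [Real.dist_eq, abs_lt]
  constructor <;> linarith

end TriadicLinear

section CentralLeaf

variable {f g h : ℝ → ℝ}

lemma leafExp_le {n : ℕ} {β : Address} (hf : IsTriadicLinearOn f (List.replicate n 1) β) :
    leafExp 1 f ≤ n :=
  Nat.sInf_le ⟨β, hf⟩

lemma IsF3.exists_isTriadicLinearOn_centralLeaf (hf : IsF3 f) :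
    ∃ β, IsTriadicLinearOn f (centralLeaf f) β :=
  Nat.sInf_mem hf.exists_isTriadicLinearOn_replicate

lemma centralLeaf_id : centralLeaf (fun t => t) = [] := by
  rw [centralLeaf, Nat.le_zero.mp (leafExp_le (n := 0) fun t _ => (psiInv_psi [] t).symm)]
  rfl

lemma IsF3.eq_id_of_leafExp_eq_zero (hf : IsF3 f) (h₀ : leafExp 1 f = 0) : f = fun t => t := by
  obtain ⟨β, hβ⟩ := hf.exists_isTriadicLinearOn_centralLeaf
  rw [centralLeaf, h₀, List.replicate_zero] at hβ
  have hsub : Iaddr [] ⊆ Iaddr β := fun y hy => by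
    rw [Iaddr_nil] at hy
    obtain ⟨x, hx, rfl⟩ := hf.2.1.surjOn hy
    rw [hβ x (Iaddr_nil ▸ hx)]
    exact psiInv_mem_Iaddr (by rwa [psi_nil])
  obtain rfl := List.prefix_nil.mp (prefix_of_Iaddr_subset hsub)
  funext t
  by_cases ht : t ∈ Icc (0 : ℝ) 1
  · rw [hβ t (Iaddr_nil ▸ ht), psi_nil, psiInv_nil]
  · exact hf.1 t ht

lemma diam_id_right (f : ℝ → ℝ) : diam f (fun t => t) = f := by
  unfold diam
  rw [phi_id]

lemma diam_id_left (hf : IsF3 f) : diam (fun t => t) f = f := by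
  unfold diam
  rw [centralLeaf_id, phi_nil hf.1]

lemma diam_psiInv_centralLeaf {β : Address} (hβ : IsTriadicLinearOn f (centralLeaf f) β)
    {s : ℝ} (hs : s ∈ Icc 0 1) (hgs : g s ∈ Icc 0 1) :
    diam f g (psiInv (centralLeaf f) s) = psiInv β (g s) := by
  rw [diam, phi_of_mem (psiInv_mem_Iaddr hs), psi_psiInv, hβ _ (psiInv_mem_Iaddr hgs),
    psi_psiInv]

lemma isTriadicLinearOn_diam {β γ δ : Address} (hβ : IsTriadicLinearOn f (centralLeaf f) β)
    (hg : IsTriadicLinearOn g γ δ) (hgI : MapsTo g (Icc 0 1) (Icc 0 1)) :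
    IsTriadicLinearOn (diam f g) (centralLeaf f ++ γ) (β ++ δ) := fun t ht => by
  obtain ⟨s, rfl⟩ := psiInv_surjective (centralLeaf f) t
  have hs : s ∈ Iaddr γ := by rwa [mem_Iaddr_append, psi_psiInv] at ht
  have hs₀₁ := Iaddr_subset_Icc γ hs
  rw [diam_psiInv_centralLeaf hβ hs₀₁ (hgI hs₀₁), hg s hs, psi_append_psiInv,
    psiInv_psiInv]

lemma IsTriadicLinearOn.of_diam {β γ δ : Address}
    (hfg : IsTriadicLinearOn (diam f g) (centralLeaf f ++ γ) δ)
    (hβ : IsTriadicLinearOn f (centralLeaf f) β) (hgI : MapsTo g (Icc 0 1) (Icc 0 1)) :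
    ∃ γ', IsTriadicLinearOn g γ γ' := by
  refine IsTriadicLinearOn.of_psiInv_comp (δ := β) (β := δ)
    (fun s hs => hgI (Iaddr_subset_Icc γ hs)) fun s hs => ?_
  have hs₀₁ := Iaddr_subset_Icc γ hs
  have hs' : psiInv (centralLeaf f) s ∈ Iaddr (centralLeaf f ++ γ) := by
    rwa [mem_Iaddr_append, psi_psiInv]
  have := hfg _ hs'
  rwa [diam_psiInv_centralLeaf hβ hs₀₁ (hgI hs₀₁), psi_append_psiInv] at this

lemma leafExp_add_le_of_diam (hf : IsF3 f) (hg : IsF3 g) {n : ℕ} {δ : Address}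
    (hfg : IsTriadicLinearOn (diam f g) (List.replicate n 1) δ) :
    leafExp 1 f + leafExp 1 g ≤ n := by
  by_cases hg₀ : leafExp 1 g = 0
  · rw [hg.eq_id_of_leafExp_eq_zero hg₀, diam_id_right] at hfg
    have := leafExp_le hfg
    omega
  obtain ⟨β, hβ⟩ := hf.exists_isTriadicLinearOn_centralLeaf
  set a := leafExp 1 f
  -- Refining to depth `max n a` puts the leaf below `l(f)`.
  have hext := hfg.append (List.replicate (max n a - n) 1)
  have hsplit : List.replicate n 1 ++ List.replicate (max n a - n) 1 =
      centralLeaf f ++ List.replicate (max n a - a) 1 := by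
    rw [centralLeaf, ← List.replicate_add, ← List.replicate_add]
    congr 1
    omega
  rw [hsplit] at hext
  obtain ⟨γ, hγ⟩ := hext.of_diam hβ hg.mapsTo
  have := leafExp_le hγ
  omega

lemma isF3_diam (hf : IsF3 f) (hg : IsF3 g) : IsF3 (diam f g) :=
  hf.comp (hg.phi _)

lemma leafExp_diam (hf : IsF3 f) (hg : IsF3 g) :
    leafExp 1 (diam f g) = leafExp 1 f + leafExp 1 g := by
  obtain ⟨β, hβ⟩ := hf.exists_isTriadicLinearOn_centralLeaf
  obtain ⟨γ, hγ⟩ := hg.exists_isTriadicLinearOn_centralLeaf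
  obtain ⟨δ, hδ⟩ := (isF3_diam hf hg).exists_isTriadicLinearOn_centralLeaf
  refine le_antisymm (leafExp_le (β := β ++ γ) ?_) (leafExp_add_le_of_diam hf hg hδ)
  rw [List.replicate_add]
  exact isTriadicLinearOn_diam hβ hγ hg.mapsTo

lemma centralLeaf_diam (hf : IsF3 f) (hg : IsF3 g) :
    centralLeaf (diam f g) = centralLeaf f ++ centralLeaf g := by
  rw [centralLeaf, leafExp_diam hf hg, List.replicate_add]
  rfl

lemma diam_assoc (hf : IsF3 f) (hg : IsF3 g) (hh : IsF3 h) :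
    diam (diam f g) h = diam f (diam g h) := by
  funext t
  show f (phi (centralLeaf f) g (phi (centralLeaf (diam f g)) h t)) =
    f (phi (centralLeaf f) (fun s => g (phi (centralLeaf g) h s)) t)
  rw [centralLeaf_diam hf hg, phi_comp hg.1 (hh.phi _).1, phi_phi hh.1]

end CentralLeaf

/-- `⋄` makes `F₃` a monoid with identity the identity homeomorphism:
`F₃` is closed under `⋄`, the identity map is a two-sided unit, and `⋄` is associative. -/
theorem diam_monoid :
    (∀ f g : ℝ → ℝ, IsF3 f → IsF3 g → IsF3 (diam f g)) ∧
    (∀ f : ℝ → ℝ, IsF3 f → diam f (fun t => t) = f ∧ diam (fun t => t) f = f) ∧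
    (∀ f g h : ℝ → ℝ, IsF3 f → IsF3 g → IsF3 h →
      diam (diam f g) h = diam f (diam g h)) :=
  ⟨fun _ _ => isF3_diam, fun f hf => ⟨diam_id_right f, diam_id_left hf⟩,
    fun _ _ _ => diam_assoc⟩
end
end

section
/- The sequence defined by c(1) = 1 and, for n ≥ 2, c(n) = 4·∑_{i=1}^{⌊n/2⌋} C(n,i)·c(i)·c(n−i) for odd n, and c(n) = 4·∑_{i=1}^{n/2−1} C(n,i)·c(i)·c(n−i) + 2·C(n, n/2)·c(n/2)² for even n, satisfies the closed form c(n) = 2^{n−1} · n! · Catalan(n−1) for all n ≥ 1. -/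
/-!
Pairing the summand at `i` with the one at `n - i` shows that both recurrences say
`c n = 2 * ∑_{i=1}^{n-1} C(n,i) c(i) c(n-i)`, which determines `c` from `c 1`. For
`c n = 2^(n-1) n! Cat(n-1)` the summand is `2^(n-2) n! Cat(i-1) Cat(n-1-i)`, so the right-hand
side is `2^(n-1) n! Cat(n-1)` by Segner's recurrence for the Catalan numbers.
-/

open Finset Nat

theorem Finset.sum_Icc_one_sub_one_eq_add_reflect {M : Type*} [AddCommMonoid M] (g : ℕ → M)
    (n : ℕ) :
    ∑ i ∈ Icc 1 (n - 1), g i =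
      ∑ i ∈ Icc 1 (n / 2), g i + ∑ i ∈ Icc 1 ((n - 1) / 2), g (n - i) := by
  have hsplit : Icc 1 (n - 1) = Icc 1 (n / 2) ∪ Icc (n / 2 + 1) (n - 1) := by
    ext i; simp only [mem_union, mem_Icc]; omega
  have hdisj : Disjoint (Icc 1 (n / 2)) (Icc (n / 2 + 1) (n - 1)) :=
    disjoint_left.2 fun i hi hi' => by simp only [mem_Icc] at hi hi'; omega
  rw [hsplit, sum_union hdisj]
  congr 1
  refine sum_nbij' (n - ·) (n - ·) ?_ ?_ ?_ ?_ ?_ <;> intro i hi <;>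
    simp only [mem_Icc] at hi ⊢
  all_goals first | omega | rw [Nat.sub_sub_self (by omega)]

theorem Finset.sum_Icc_one_sub_one_of_odd {M : Type*} [AddCommMonoid M] {g : ℕ → M} {n : ℕ}
    (hg : ∀ i ≤ n, g (n - i) = g i) (hn : Odd n) :
    ∑ i ∈ Icc 1 (n - 1), g i = 2 • ∑ i ∈ Icc 1 (n / 2), g i := by
  have hhalf : (n - 1) / 2 = n / 2 := by obtain ⟨k, rfl⟩ := hn; omega
  rw [sum_Icc_one_sub_one_eq_add_reflect, hhalf, two_nsmul]
  congr 1
  exact sum_congr rfl fun i hi => hg i (by simp only [mem_Icc] at hi; omega)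

theorem Finset.sum_Icc_one_sub_one_of_even {M : Type*} [AddCommMonoid M] {g : ℕ → M} {n : ℕ}
    (hg : ∀ i ≤ n, g (n - i) = g i) (hn : Even n) (hn0 : n ≠ 0) :
    ∑ i ∈ Icc 1 (n - 1), g i = 2 • ∑ i ∈ Icc 1 (n / 2 - 1), g i + g (n / 2) := by
  have hhalf : n / 2 = (n - 1) / 2 + 1 := by obtain ⟨k, rfl⟩ := hn; omega
  have hreflect : ∑ i ∈ Icc 1 ((n - 1) / 2), g (n - i) = ∑ i ∈ Icc 1 ((n - 1) / 2), g i :=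
    sum_congr rfl fun i hi => hg i (by simp only [mem_Icc] at hi; omega)
  rw [sum_Icc_one_sub_one_eq_add_reflect, hreflect, hhalf, sum_Icc_succ_top (by omega),
    Nat.add_sub_cancel, two_nsmul]
  abel

theorem Finset.sum_Icc_one_eq_sum_range {M : Type*} [AddCommMonoid M] (f : ℕ → M) (n : ℕ) :
    ∑ i ∈ Icc 1 n, f i = ∑ k ∈ range n, f (k + 1) := by
  rw [range_eq_Ico, sum_Ico_add', zero_add, Ico_add_one_right_eq_Icc]

theorem eq_two_mul_sum_choose_of_half_recurrences {c : ℕ → ℕ}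
    (hodd : ∀ n : ℕ, 2 ≤ n → Odd n →
      c n = 4 * ∑ i ∈ Icc 1 (n / 2), n.choose i * c i * c (n - i))
    (heven : ∀ n : ℕ, 2 ≤ n → Even n →
      c n = 4 * ∑ i ∈ Icc 1 (n / 2 - 1), n.choose i * c i * c (n - i)
          + 2 * n.choose (n / 2) * c (n / 2) ^ 2)
    {n : ℕ} (hn : 2 ≤ n) :
    c n = 2 * ∑ i ∈ Icc 1 (n - 1), n.choose i * c i * c (n - i) := by
  have hsymm : ∀ i ≤ n, n.choose (n - i) * c (n - i) * c (n - (n - i)) =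
      n.choose i * c i * c (n - i) := fun i hi => by
    rw [Nat.choose_symm hi, Nat.sub_sub_self hi, mul_right_comm]
  rcases Nat.even_or_odd n with hn' | hn'
  · have hhalf : n - n / 2 = n / 2 := by obtain ⟨k, rfl⟩ := hn'; omega
    rw [heven n hn hn', sum_Icc_one_sub_one_of_even hsymm hn' (by omega), smul_eq_mul, hhalf]
    ring
  · rw [hodd n hn hn', sum_Icc_one_sub_one_of_odd hsymm hn', smul_eq_mul]
    ring

theorem eq_of_two_mul_sum_choose_recurrence {c f : ℕ → ℕ} (h1 : c 1 = f 1)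
    (hc : ∀ n, 2 ≤ n → c n = 2 * ∑ i ∈ Icc 1 (n - 1), n.choose i * c i * c (n - i))
    (hf : ∀ n, 2 ≤ n → f n = 2 * ∑ i ∈ Icc 1 (n - 1), n.choose i * f i * f (n - i)) :
    ∀ n, 1 ≤ n → c n = f n := by
  intro n
  induction n using Nat.strong_induction_on with
  | _ n ih =>
    intro hn
    obtain rfl | hn2 := hn.eq_or_lt
    · exact h1
    rw [hc n hn2, hf n hn2]
    congr 1
    refine sum_congr rfl fun i hi => ?_
    simp only [mem_Icc] at hi
    rw [ih i (by omega) hi.1, ih (n - i) (by omega) (by omega)]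

theorem catalan_succ_eq_sum_range (m : ℕ) :
    catalan (m + 1) = ∑ k ∈ range (m + 1), catalan k * catalan (m - k) := by
  rw [catalan_succ', Nat.sum_antidiagonal_eq_sum_range_succ (fun i j => catalan i * catalan j)]

theorem two_mul_sum_choose_mul_closed_form (m : ℕ) :
    2 * ∑ i ∈ Icc 1 (m + 1), (m + 2).choose i * (2 ^ (i - 1) * i ! * catalan (i - 1)) *
        (2 ^ (m + 2 - i - 1) * (m + 2 - i)! * catalan (m + 2 - i - 1)) =
      2 ^ (m + 1) * (m + 2)! * catalan (m + 1) := by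
  have hterm : ∀ k ∈ range (m + 1),
      (m + 2).choose (k + 1) * (2 ^ (k + 1 - 1) * (k + 1)! * catalan (k + 1 - 1)) *
        (2 ^ (m + 2 - (k + 1) - 1) * (m + 2 - (k + 1))! * catalan (m + 2 - (k + 1) - 1)) =
      2 ^ m * (m + 2)! * (catalan k * catalan (m - k)) := fun k hk => by
    obtain ⟨l, rfl⟩ := Nat.exists_eq_add_of_le (Nat.lt_succ_iff.1 (mem_range.1 hk))
    have hfac := Nat.choose_mul_factorial_mul_factorial (show k + 1 ≤ k + l + 2 by omega)
    rw [show k + l + 2 - (k + 1) = l + 1 by omega] at hfac ⊢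
    rw [show l + 1 - 1 = l by omega, show k + 1 - 1 = k by omega, show k + l - k = l by omega,
      ← hfac, pow_add]
    ring
  rw [sum_Icc_one_eq_sum_range, sum_congr rfl hterm, ← mul_sum, ← catalan_succ_eq_sum_range]
  ring

/-- the sequence counting disjoint-union representatives, defined by
`c(1) = 1` and the stated recurrences for `n ≥ 2`, has closed form
`c(n) = 2^(n-1) · n! · Catalan(n-1)` for all `n ≥ 1`. -/
theorem count_closed_form (c : ℕ → ℕ) (h1 : c 1 = 1)
    (hodd : ∀ n : ℕ, 2 ≤ n → Odd n →
      c n = 4 * ∑ i ∈ Finset.Icc 1 (n / 2), n.choose i * c i * c (n - i))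
    (heven : ∀ n : ℕ, 2 ≤ n → Even n →
      c n = 4 * ∑ i ∈ Finset.Icc 1 (n / 2 - 1), n.choose i * c i * c (n - i)
          + 2 * n.choose (n / 2) * c (n / 2) ^ 2) :
    ∀ n : ℕ, 1 ≤ n → c n = 2 ^ (n - 1) * n.factorial * catalan (n - 1) := by
  refine eq_of_two_mul_sum_choose_recurrence (by simp [h1])
    (fun n hn => eq_two_mul_sum_choose_of_half_recurrences hodd heven hn) fun n hn => ?_
  obtain ⟨m, rfl⟩ := Nat.exists_eq_add_of_le' hn
  exact (two_mul_sum_choose_mul_closed_form m).symm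
end
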